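/- Let δ > 0 and let (N_j)_{j≥1} be a strictly increasing sequence of positive integers. Then the Borel set Ẽ = {x ∈ 𝕋 : sup_j N_j^{1+δ}·dist(x, (2/N_j)ℤ) < ∞} is a parisian set. -/

import Mathlib

/-!
For `x ∈ Ẽ` the distance from `x` to `(2/N_j)ℤ` is `O(N_j^{-1-δ})`; since `e^{iπN_j·}` equals `1`
on `(2/N_j)ℤ` and is `πN_j`-Lipschitz, `e^{iπN_j x} → 1` on `Ẽ`. Let `μ` be concentrated on `Ẽ`
with `supp μ̂` Rajchman. As `μ̂` vanishes off its support, `μ̂(n) → 0` as `|n| → ∞`, whereas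
dominated convergence gives `μ̂(N_j + m) → μ̂(m)`. So every Fourier coefficient of `μ` vanishes,
hence `μ = 0`, which is absolutely continuous.
-/

open MeasureTheory Filter Metric Set

noncomputable section

instance : Fact ((0:ℝ) < 2) := ⟨two_pos⟩

/-- The circle `𝕋 = ℝ/2ℤ`. -/
abbrev Circle2 := AddCircle (2 : ℝ)

/-- Integral of `f` against a complex measure, defined via the Jordan decompositions of the
real and imaginary parts. -/
def cmIntegral (μ : ComplexMeasure Circle2) (f : Circle2 → ℂ) : ℂ :=
  ((∫ x, f x ∂μ.re.toJordanDecomposition.posPart) -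
      ∫ x, f x ∂μ.re.toJordanDecomposition.negPart) +
    Complex.I * ((∫ x, f x ∂μ.im.toJordanDecomposition.posPart) -
      ∫ x, f x ∂μ.im.toJordanDecomposition.negPart)

/-- The Fourier coefficient `μ̂(n) = (1/2) ∫_𝕋 e^{iπnx} dμ(x)`; here `fourier n x = exp (iπnx)`
on `AddCircle 2`. -/
def cmFourierCoeff (μ : ComplexMeasure Circle2) (n : ℤ) : ℂ :=
  (1 / 2 : ℂ) * cmIntegral μ (fun x => fourier n x)

/-- The support of the Fourier transform of `μ`. -/
def fourierSupport (μ : ComplexMeasure Circle2) : Set ℤ := {n | cmFourierCoeff μ n ≠ 0}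

/-- A positive measure with the same null sets as the total variation `|μ|`. -/
def cmVariation (μ : ComplexMeasure Circle2) : Measure Circle2 :=
  μ.re.totalVariation + μ.im.totalVariation

/-- `μ` is concentrated on `E`, i.e. `|μ|(𝕋 ∖ E) = 0`. -/
def ConcentratedOn (μ : ComplexMeasure Circle2) (E : Set Circle2) : Prop :=
  cmVariation μ Eᶜ = 0

/-- `Λ ⊆ ℤ` is a Rajchman set. -/
def IsRajchman (Λ : Set ℤ) : Prop :=
  ∀ μ : ComplexMeasure Circle2,
    Tendsto (cmFourierCoeff μ) (Filter.cofinite ⊓ Filter.principal Λᶜ) (nhds 0) →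
    Tendsto (cmFourierCoeff μ) (Filter.cofinite ⊓ Filter.principal Λ) (nhds 0)

/-- `Λ ⊆ ℤ` is a Riesz set. -/
def IsRiesz (Λ : Set ℤ) : Prop :=
  ∀ μ : ComplexMeasure Circle2, fourierSupport μ ⊆ Λ →
    μ ≪ᵥ (volume : Measure Circle2).toENNRealVectorMeasure

/-- `E ⊆ 𝕋` is a parisian set. -/
def IsParisian (E : Set Circle2) : Prop :=
  ∀ μ : ComplexMeasure Circle2, ConcentratedOn μ E →
    ¬ μ ≪ᵥ (volume : Measure Circle2).toENNRealVectorMeasure →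
    ¬ IsRajchman (fourierSupport μ)

/-- `Ω((n_j)) = {∑ ε_j n_j : ε_j ∈ {-1,0,1}, finitely many nonzero}`. -/
def Omega (n : ℕ → ℤ) : Set ℤ :=
  {k | ∃ (F : Finset ℕ) (ε : ℕ → ℤ),
    (∀ j, ε j = -1 ∨ ε j = 0 ∨ ε j = 1) ∧ k = ∑ j ∈ F, ε j * n j}

/-- The image of `(2/N)ℤ` in `𝕋`. -/
def grid (N : ℕ) : Set Circle2 := Set.range fun k : ℤ => ((2 * k / N : ℝ) : Circle2)

/-- `A(N,δ)`: the points of `𝕋` within distance `1/(2N^{1+δ})` of `(2/N)ℤ`. -/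
def nbhdGrid (N : ℕ) (δ : ℝ) : Set Circle2 :=
  {x | Metric.infDist x (grid N) ≤ 1 / (2 * (N : ℝ) ^ ((1 : ℝ) + δ))}

/-- `Ẽ = {x ∈ 𝕋 : sup_j N_j^{1+δ}·dist(x, (2/N_j)ℤ) < ∞}`. -/
def Etilde (N : ℕ → ℕ) (δ : ℝ) : Set Circle2 :=
  {x | ∃ C : ℝ, ∀ j, (N j : ℝ) ^ ((1 : ℝ) + δ) * Metric.infDist x (grid (N j)) ≤ C}

/-- The total variation norm `‖μ‖` of a complex measure, as the supremum of
`∑ |μ(B i)|` over finite disjoint families of measurable sets. -/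
def cmNorm (μ : ComplexMeasure Circle2) : ℝ :=
  sSup {r : ℝ | ∃ (n : ℕ) (B : Fin n → Set Circle2), (∀ i, MeasurableSet (B i)) ∧
    (∀ i j, i ≠ j → Disjoint (B i) (B j)) ∧ r = ∑ i, ‖μ (B i)‖}

/-- Fourier coefficient of a positive measure. -/
def posFourierCoeff (μ : Measure Circle2) (n : ℤ) : ℂ :=
  (1 / 2 : ℂ) * ∫ x, fourier n x ∂μ

open scoped Real Topology BoundedContinuousFunction

namespace AddCircle

variable {T : ℝ}

lemma exists_coe_eq_and_abs_eq_norm (z : AddCircle T) :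
    ∃ a : ℝ, (a : AddCircle T) = z ∧ |a| = ‖z‖ := by
  obtain ⟨b, rfl⟩ := QuotientAddGroup.mk_surjective z
  refine ⟨b - round (T⁻¹ * b) * T, ?_, (norm_eq (p := T)).symm⟩
  rw [coe_sub, sub_eq_self, coe_eq_zero_iff]
  exact ⟨round (T⁻¹ * b), by rw [zsmul_eq_mul]⟩

end AddCircle

lemma fourier_apply_add {T : ℝ} (n : ℤ) (x y : AddCircle T) :
    fourier n (x + y) = fourier n x * fourier n y := by
  simp only [fourier_apply, smul_add, AddCircle.toCircle_add, Circle.coe_mul]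

lemma norm_fourier_apply {T : ℝ} (n : ℤ) (x : AddCircle T) : ‖fourier n x‖ = 1 := by
  rw [fourier_apply, Circle.norm_coe]

lemma norm_fourier_sub_fourier_le {T : ℝ} (hT : 0 < T) (n : ℤ) (x y : AddCircle T) :
    ‖fourier n x - fourier n y‖ ≤ 2 * π * |n| / T * dist x y := by
  obtain ⟨a, ha, hdist⟩ := AddCircle.exists_coe_eq_and_abs_eq_norm (x - y)
  have hrot : fourier n (a : AddCircle T) = Complex.exp (Complex.I * ↑(2 * π * n * a / T)) := by
    rw [fourier_coe_apply]; push_cast; ring_nf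
  calc ‖fourier n x - fourier n y‖
      = ‖fourier n y‖ * ‖fourier n (a : AddCircle T) - 1‖ := by
        rw [← norm_mul, mul_sub, mul_one, ← fourier_apply_add, ha, add_sub_cancel]
    _ ≤ 1 * ‖2 * π * n * a / T‖ := by
        rw [hrot, norm_fourier_apply]
        exact mul_le_mul_of_nonneg_left Real.norm_exp_I_mul_ofReal_sub_one_le zero_le_one
    _ = 2 * π * |n| / T * dist x y := by
        rw [dist_eq_norm, ← hdist, Real.norm_eq_abs, one_mul, abs_div, abs_mul, abs_mul,
          abs_of_pos hT, abs_of_pos Real.two_pi_pos, Int.cast_abs]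
        ring

lemma fourier_eq_one_of_mem_grid {n : ℕ} {y : Circle2} (hy : y ∈ grid n) : fourier n y = 1 := by
  obtain ⟨k, rfl⟩ := hy
  rcases Nat.eq_zero_or_pos n with rfl | hn
  · simp
  · rw [fourier_coe_apply, ← Complex.exp_int_mul_two_pi_mul_I k]
    congr 1
    have : (n : ℂ) ≠ 0 := by exact_mod_cast hn.ne'
    push_cast
    field_simp

lemma norm_fourier_sub_one_le_infDist_grid (n : ℕ) (x : Circle2) :
    ‖fourier n x - 1‖ ≤ π * n * infDist x (grid n) := by
  rcases Nat.eq_zero_or_pos n with rfl | hn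
  · simp
  have hπn : 0 < π * n := by positivity
  rw [← div_le_iff₀' hπn]
  refine (le_infDist (s := grid n) ⟨0, 0, by simp⟩).2 fun y hy => ?_
  rw [div_le_iff₀' hπn, ← fourier_eq_one_of_mem_grid hy]
  refine (norm_fourier_sub_fourier_le two_pos n x y).trans_eq ?_
  rw [Nat.abs_cast]
  push_cast
  ring

lemma tendsto_fourier_one_of_mem_Etilde {δ : ℝ} (hδ : 0 < δ) {N : ℕ → ℕ}
    (hN : Tendsto N atTop atTop) {x : Circle2} (hx : x ∈ Etilde N δ) :
    Tendsto (fun j => fourier (N j : ℤ) x) atTop (𝓝 1) := by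
  obtain ⟨C, hC⟩ := hx
  have hbound (j : ℕ) : ‖fourier (N j : ℤ) x - 1‖ ≤ π * C * (N j : ℝ) ^ (-δ) :=
    calc ‖fourier (N j : ℤ) x - 1‖ ≤ π * (N j * infDist x (grid (N j))) :=
          (norm_fourier_sub_one_le_infDist_grid _ x).trans_eq (mul_assoc ..)
      _ = π * ((N j : ℝ) ^ (-δ) * ((N j : ℝ) ^ ((1 : ℝ) + δ) * infDist x (grid (N j)))) := by
          rw [← mul_assoc ((N j : ℝ) ^ (-δ)), ← Real.rpow_add' (Nat.cast_nonneg _) (by simp),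
            neg_add_cancel_comm_assoc, Real.rpow_one]
      _ ≤ π * ((N j : ℝ) ^ (-δ) * C) := by gcongr; exact hC j
      _ = π * C * (N j : ℝ) ^ (-δ) := by ring
  have hdecay : Tendsto (fun j => π * C * (N j : ℝ) ^ (-δ)) atTop (𝓝 0) := by
    simpa using ((tendsto_rpow_neg_atTop hδ).comp
      (tendsto_natCast_atTop_atTop.comp hN)).const_mul (π * C)
  exact tendsto_iff_norm_sub_tendsto_zero.2 (squeeze_zero (fun j => norm_nonneg _) hbound hdecay)

namespace ContinuousMap

variable {X E : Type*} (𝕜 : Type*) [TopologicalSpace X] [CompactSpace X] [MeasurableSpace X]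
  [BorelSpace X] [NormedAddCommGroup E] [NormedSpace ℝ E] [CompleteSpace E]
  [SecondCountableTopologyEither X E] [NormedRing 𝕜] [Module 𝕜 E] [IsBoundedSMul 𝕜 E]
  [SMulCommClass ℝ 𝕜 E] (P : Measure X) [IsFiniteMeasure P]

def integralCLM : C(X, E) →L[𝕜] E :=
  (L1.integralCLM' 𝕜).comp (toLp 1 P 𝕜)

lemma integralCLM_apply (f : C(X, E)) : integralCLM 𝕜 P f = ∫ x, f x ∂P := by
  rw [integralCLM, ContinuousLinearMap.comp_apply, ← L1.integral_eq', L1.integral_eq_integral]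
  exact integral_congr_ae (coeFn_toLp P f)

end ContinuousMap

namespace MeasureTheory.SignedMeasure

variable {X : Type*} [MeasurableSpace X]

lemma eq_zero_of_posPart_eq_negPart (s : SignedMeasure X)
    (h : s.toJordanDecomposition.posPart = s.toJordanDecomposition.negPart) : s = 0 := by
  ext i hi
  rw [apply_eq_posPart_real_sub_negPart_real s hi, h, sub_self]
  rfl

lemma eq_zero_of_forall_integral_posPart_eq [TopologicalSpace X] [HasOuterApproxClosed X]
    [BorelSpace X] (s : SignedMeasure X)
    (h : ∀ g : X →ᵇ ℝ, ∫ x, g x ∂s.toJordanDecomposition.posPart =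
      ∫ x, g x ∂s.toJordanDecomposition.negPart) : s = 0 :=
  s.eq_zero_of_posPart_eq_negPart (ext_of_forall_integral_eq_of_IsFiniteMeasure h)

lemma toJordanDecomposition_posPart_absolutelyContinuous (s : SignedMeasure X) :
    s.toJordanDecomposition.posPart ≪ s.totalVariation :=
  ((totalVariation_absolutelyContinuous_iff s _).1 .rfl).1

lemma toJordanDecomposition_negPart_absolutelyContinuous (s : SignedMeasure X) :
    s.toJordanDecomposition.negPart ≪ s.totalVariation :=
  ((totalVariation_absolutelyContinuous_iff s _).1 .rfl).2

end MeasureTheory.SignedMeasure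

section ComplexMeasure

variable (μ : ComplexMeasure Circle2)

def cmIntegralCLM : C(Circle2, ℂ) →L[ℂ] ℂ :=
  (ContinuousMap.integralCLM ℂ μ.re.toJordanDecomposition.posPart -
      ContinuousMap.integralCLM ℂ μ.re.toJordanDecomposition.negPart) +
    Complex.I • (ContinuousMap.integralCLM ℂ μ.im.toJordanDecomposition.posPart -
      ContinuousMap.integralCLM ℂ μ.im.toJordanDecomposition.negPart)

lemma cmIntegralCLM_apply (f : C(Circle2, ℂ)) : cmIntegralCLM μ f = cmIntegral μ f := by
  simp [cmIntegralCLM, ContinuousMap.integralCLM_apply, cmIntegral]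

lemma cmIntegral_eq_zero_of_cmFourierCoeff_eq_zero (h : ∀ n, cmFourierCoeff μ n = 0)
    (f : C(Circle2, ℂ)) : cmIntegral μ f = 0 := by
  have hspan : Submodule.span ℂ (range (@fourier 2)) ≤ (cmIntegralCLM μ).ker := by
    rw [Submodule.span_le]
    rintro _ ⟨n, rfl⟩
    have hn := h n
    rw [cmFourierCoeff, mul_eq_zero] at hn
    exact (cmIntegralCLM_apply μ _).trans (hn.resolve_left (by norm_num))
  have hker := Submodule.topologicalClosure_minimal _ hspan (cmIntegralCLM μ).isClosed_ker
  rw [span_fourier_closure_eq_top] at hker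
  rw [← cmIntegralCLM_apply]
  exact hker Submodule.mem_top

lemma eq_zero_of_cmFourierCoeff_eq_zero (h : ∀ n, cmFourierCoeff μ n = 0) : μ = 0 := by
  have hreal (g : Circle2 →ᵇ ℝ) :
      (∫ x, g x ∂μ.re.toJordanDecomposition.posPart) =
        ∫ x, g x ∂μ.re.toJordanDecomposition.negPart ∧
      (∫ x, g x ∂μ.im.toJordanDecomposition.posPart) =
        ∫ x, g x ∂μ.im.toJordanDecomposition.negPart := by
    have h0 := cmIntegral_eq_zero_of_cmFourierCoeff_eq_zero μ h
      ⟨fun x => (g x : ℂ), by fun_prop⟩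
    simp only [cmIntegral, ContinuousMap.coe_mk, integral_complex_ofReal] at h0
    constructor
    · simpa [sub_eq_zero] using congrArg Complex.re h0
    · simpa [sub_eq_zero] using congrArg Complex.im h0
  have hre := μ.re.eq_zero_of_forall_integral_posPart_eq fun g => (hreal g).1
  have him := μ.im.eq_zero_of_forall_integral_posPart_eq fun g => (hreal g).2
  refine ComplexMeasure.equivSignedMeasure.injective ?_
  change (μ.re, μ.im) = ((0 : ComplexMeasure Circle2).re, (0 : ComplexMeasure Circle2).im)
  rw [hre, him, map_zero, map_zero]

variable {μ}

lemma ae_of_concentratedOn {E : Set Circle2} (h : ConcentratedOn μ E) :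
    ∀ᵐ x ∂cmVariation μ, x ∈ E :=
  (measure_eq_zero_iff_ae_notMem.1 h).mono fun _ hx => not_not.1 hx

lemma tendsto_cmIntegral_of_tendsto_ae {F : ℕ → Circle2 → ℂ} {f : Circle2 → ℂ} {C : ℝ}
    (hF : ∀ j, Measurable (F j)) (hFC : ∀ j x, ‖F j x‖ ≤ C)
    (hlim : ∀ᵐ x ∂cmVariation μ, Tendsto (fun j => F j x) atTop (𝓝 (f x))) :
    Tendsto (fun j => cmIntegral μ (F j)) atTop (𝓝 (cmIntegral μ f)) := by
  have hpart (P : Measure Circle2) [IsFiniteMeasure P] (hP : P ≪ cmVariation μ) :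
      Tendsto (fun j => ∫ x, F j x ∂P) atTop (𝓝 (∫ x, f x ∂P)) :=
    tendsto_integral_of_dominated_convergence (fun _ => C) (fun j => (hF j).aestronglyMeasurable)
      (integrable_const C) (fun j => ae_of_all _ (hFC j)) (hP.ae_le hlim)
  have hre : μ.re.totalVariation ≪ cmVariation μ := Measure.AbsolutelyContinuous.rfl.add_right _
  have him : μ.im.totalVariation ≪ cmVariation μ := Measure.AbsolutelyContinuous.rfl.add_right' _
  exact ((hpart _ (μ.re.toJordanDecomposition_posPart_absolutelyContinuous.trans hre)).sub
      (hpart _ (μ.re.toJordanDecomposition_negPart_absolutelyContinuous.trans hre))).add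
    (((hpart _ (μ.im.toJordanDecomposition_posPart_absolutelyContinuous.trans him)).sub
      (hpart _ (μ.im.toJordanDecomposition_negPart_absolutelyContinuous.trans him))).const_mul _)

lemma IsRajchman.tendsto_cmFourierCoeff_cofinite (h : IsRajchman (fourierSupport μ)) :
    Tendsto (cmFourierCoeff μ) cofinite (𝓝 0) := by
  have hoff : Tendsto (cmFourierCoeff μ) (cofinite ⊓ 𝓟 (fourierSupport μ)ᶜ) (𝓝 0) :=
    tendsto_const_nhds.congr' <| eventually_inf_principal.2 <|
      Eventually.of_forall fun _ hn => (not_not.1 hn).symm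
  have hsplit :
      cofinite = cofinite ⊓ 𝓟 (fourierSupport μ) ⊔ cofinite ⊓ 𝓟 (fourierSupport μ)ᶜ := by
    rw [← inf_sup_left, sup_principal, union_compl_self, principal_univ, inf_top_eq]
  rw [hsplit]
  exact (h μ hoff).sup hoff

lemma cmFourierCoeff_eq_zero_of_tendsto_fourier_one
    (hcof : Tendsto (cmFourierCoeff μ) cofinite (𝓝 0)) {n : ℕ → ℤ} (hn : Tendsto n atTop atTop)
    (hae : ∀ᵐ x ∂cmVariation μ, Tendsto (fun j => fourier (n j) x) atTop (𝓝 1)) (m : ℤ) :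
    cmFourierCoeff μ m = 0 := by
  have hshift : Tendsto (fun j => n j + m) atTop cofinite := by
    rw [Int.cofinite_eq]
    exact (tendsto_atTop_add_const_right _ m hn).mono_right le_sup_right
  have hlim : Tendsto (fun j => cmFourierCoeff μ (n j + m)) atTop (𝓝 (cmFourierCoeff μ m)) := by
    refine (tendsto_cmIntegral_of_tendsto_ae (C := 1) (fun j => (fourier _).continuous.measurable)
      (fun j x => (norm_fourier_apply ..).le) ?_).const_mul _
    filter_upwards [hae] with x hx
    simpa [fourier_add] using hx.mul_const (fourier m x)
  exact tendsto_nhds_unique hlim (hcof.comp hshift)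

end ComplexMeasure

theorem isParisian_Etilde_general (δ : ℝ) (hδ : 0 < δ) (N : ℕ → ℕ)
    (hmono : StrictMono N) : IsParisian (Etilde N δ) := by
  intro μ hconc hnotac hraj
  have hN : Tendsto N atTop atTop := hmono.tendsto_atTop
  have hae : ∀ᵐ x ∂cmVariation μ, Tendsto (fun j => fourier (N j : ℤ) x) atTop (𝓝 1) :=
    (ae_of_concentratedOn hconc).mono fun x hx => tendsto_fourier_one_of_mem_Etilde hδ hN hx
  have hμ : μ = 0 := eq_zero_of_cmFourierCoeff_eq_zero μ
    (cmFourierCoeff_eq_zero_of_tendsto_fourier_one hraj.tendsto_cmFourierCoeff_cofinite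
      (tendsto_natCast_atTop_atTop.comp hN) hae)
  exact hnotac (hμ ▸ VectorMeasure.AbsolutelyContinuous.zero _)

/-- For `δ > 0` and a strictly increasing sequence of positive integers `(N_j)`, the set
`Ẽ = {x : sup_j N_j^{1+δ}·dist(x, (2/N_j)ℤ) < ∞}` is parisian. -/
theorem isParisian_Etilde (δ : ℝ) (hδ : 0 < δ) (N : ℕ → ℕ)
    (hmono : StrictMono N) (hpos : ∀ j, 0 < N j) : IsParisian (Etilde N δ) :=
  isParisian_Etilde_general δ hδ N hmono
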